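/- arXiv:2010.01285 — 4 statements merged into one kernel-verified Lean document; each statement's English description precedes it below -/
import Mathlib

section
/- Let b > 0, let k be a natural number, and let a, a' : Fin k → ℝ. Then for every z : Fin k → ℝ, ∏_{j} exp(−|z_j − a_j|/b) ≤ exp((∑_{j} |a_j − a'_j|)/b) · ∏_{j} exp(−|z_j − a'_j|/b). In particular, the ratio of the product Laplace densities centered at a and at a' is bounded by exp(‖a − a'‖₁ / b). -/
open Real Finset

theorem exp_neg_abs_sub_div_le_exp_abs_sub_div_mul {b : ℝ} (hb : 0 ≤ b) (x a a' : ℝ) :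
    exp (-|x - a| / b) ≤ exp (|a - a'| / b) * exp (-|x - a'| / b) := by
  rw [← exp_add, exp_le_exp, ← add_div]
  gcongr
  linarith [abs_sub_le x a a']

/-- The ratio of the product Laplace densities (scale `b > 0`) centered at
`a` and at `a'` is bounded by `exp(‖a − a'‖₁ / b)`: for every `z`,
`∏ j, exp(−|z_j − a_j|/b) ≤ exp((∑ j, |a_j − a'_j|)/b) · ∏ j, exp(−|z_j − a'_j|/b)`. -/
theorem laplace_density_ratio_bound (b : ℝ) (hb : 0 < b) (k : ℕ)
    (a a' z : Fin k → ℝ) :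
    ∏ j, Real.exp (-|z j - a j| / b) ≤
      Real.exp ((∑ j, |a j - a' j|) / b) * ∏ j, Real.exp (-|z j - a' j| / b) := by
  calc ∏ j, exp (-|z j - a j| / b)
      ≤ ∏ j, (exp (|a j - a' j| / b) * exp (-|z j - a' j| / b)) :=
        prod_le_prod (fun _ _ => (exp_pos _).le)
          fun j _ => exp_neg_abs_sub_div_le_exp_abs_sub_div_mul hb.le (z j) (a j) (a' j)
    _ = exp ((∑ j, |a j - a' j|) / b) * ∏ j, exp (-|z j - a' j| / b) := by
        rw [prod_mul_distrib, ← exp_sum, sum_div]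
end

section
/- (Theorem 1, Laplace mechanism.) Let D be a type with an adjacency relation, let f : D → (Fin k → ℝ), and suppose f has ℓ₁-sensitivity at most Δ > 0: for all adjacent x, x' ∈ D, ∑_j |f(x)_j − f(x')_j| ≤ Δ. Let ε > 0 and set b = Δ/ε. Define the mechanism A that on input x outputs f(x) + r, where the coordinates r_1, …, r_k are i.i.d. samples from Lap(b); formally, A(x) is the pushforward of the k-fold product of Lap(b) under the map r ↦ f(x) + r. Then A is ε-differentially private: for all adjacent x, x' ∈ D and all measurable sets S ⊆ (Fin k → ℝ), A(x)(S) ≤ exp(ε) · A(x')(S). -/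
/-!
Translating the noise by `f x` gives `A x` the density `s ↦ ∏ⱼ p (sⱼ - f x j)`, where `p` is the
Laplace density. As `|·|` is 1-Lipschitz, `p t ≤ exp (|t - t'| / b) * p t'`, so the density of `A x`
is at most `exp (∑ⱼ |f x j - f x' j| / b) ≤ exp (Δ / b) = exp ε` times that of `A x'`, and the
inequality of densities integrates to an inequality of measures.
-/

open MeasureTheory Real

/-- The Laplace distribution `Lap(b)` on `ℝ` with scale parameter `b`:
the measure with density `t ↦ (1/(2b))·exp(−|t|/b)` w.r.t. Lebesgue measure. -/
noncomputable def Lap (b : ℝ) : Measure ℝ :=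
  (volume : Measure ℝ).withDensity
    fun t => ENNReal.ofReal ((1 / (2 * b)) * Real.exp (-|t| / b))

open scoped ENNReal

namespace MeasureTheory

theorem lintegral_fin_nat_prod_eq_prod {n : ℕ} {α : Type*} [MeasurableSpace α]
    (μ : Fin n → Measure α) [∀ i, SigmaFinite (μ i)]
    {f : Fin n → α → ℝ≥0∞} (hf : ∀ i, Measurable (f i)) :
    ∫⁻ x : Fin n → α, ∏ i, f i (x i) ∂(Measure.pi μ) = ∏ i, ∫⁻ x, f i x ∂(μ i) := by
  induction n with
  | zero => simp
  | succ n ih =>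
    calc
      _ = ∫⁻ x : α × (Fin n → α), f 0 x.1 * ∏ i : Fin n, f i.succ (x.2 i)
          ∂((μ 0).prod (Measure.pi fun i ↦ μ i.succ)) := by
        rw [← ((measurePreserving_piFinSuccAbove μ 0).symm).lintegral_comp_emb
          (MeasurableEquiv.measurableEmbedding _)]
        simp_rw [MeasurableEquiv.piFinSuccAbove_symm_apply, Fin.insertNthEquiv,
          Fin.prod_univ_succ, Fin.insertNth_zero, Equiv.coe_fn_mk, Fin.cons_succ,
          Fin.zero_succAbove, cast_eq, Fin.cons_zero]
      _ = (∫⁻ x, f 0 x ∂μ 0) * ∏ i : Fin n, ∫⁻ x, f i.succ x ∂(μ i.succ) := by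
        have hrest : Measurable fun y : Fin n → α ↦ ∏ i : Fin n, f i.succ (y i) :=
          Finset.measurable_prod _ fun i _ ↦ (hf i.succ).comp (measurable_pi_apply i)
        rw [← ih _ fun i ↦ hf i.succ, ← lintegral_prod_mul (hf 0).aemeasurable hrest.aemeasurable]
      _ = ∏ i, ∫⁻ x, f i x ∂(μ i) := by rw [Fin.prod_univ_succ]

theorem Measure.pi_withDensity {n : ℕ} {α : Type*} [MeasurableSpace α]
    (μ : Fin n → Measure α) [∀ i, SigmaFinite (μ i)]
    {g : Fin n → α → ℝ≥0∞} (hg : ∀ i, Measurable (g i))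
    [∀ i, SigmaFinite ((μ i).withDensity (g i))] :
    Measure.pi (fun i ↦ (μ i).withDensity (g i)) =
      (Measure.pi μ).withDensity fun x ↦ ∏ i, g i (x i) := by
  refine Measure.pi_eq fun s hs ↦ ?_
  rw [withDensity_apply _ (.univ_pi hs), Measure.restrict_pi_pi,
    lintegral_fin_nat_prod_eq_prod _ hg]
  exact Finset.prod_congr rfl fun i _ ↦ (withDensity_apply _ (hs i)).symm

theorem map_const_add_withDensity {G : Type*} [MeasurableSpace G] [AddGroup G] [MeasurableAdd G]
    (μ : Measure G) [μ.IsAddLeftInvariant] (g : G → ℝ≥0∞) (a : G) :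
    (μ.withDensity g).map (a + ·) = μ.withDensity fun x ↦ g (-a + x) := by
  ext s hs
  rw [Measure.map_apply (measurable_const_add a) hs, withDensity_apply _ hs,
    withDensity_apply _ (hs.preimage (measurable_const_add a)),
    ← (measurePreserving_add_left μ a).setLIntegral_comp_preimage_emb
      (MeasurableEquiv.addLeft a).measurableEmbedding (fun x ↦ g (-a + x)) s]
  simp only [neg_add_cancel_left]

theorem map_const_add_withDensity_le_smul {G : Type*} [MeasurableSpace G] [AddGroup G]
    [MeasurableAdd G] (μ : Measure G) [μ.IsAddLeftInvariant] {g : G → ℝ≥0∞} (hg : Measurable g)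
    {a a' : G} {c : ℝ≥0∞} (h : ∀ x, g (-a + x) ≤ c * g (-a' + x)) :
    (μ.withDensity g).map (a + ·) ≤ c • (μ.withDensity g).map (a' + ·) := by
  rw [map_const_add_withDensity, map_const_add_withDensity,
    ← withDensity_smul c (f := fun x ↦ g (-a' + x)) (hg.comp (measurable_const_add _))]
  exact withDensity_mono (.of_forall h)

end MeasureTheory

/-- `Lap b = volume.withDensity (laplacePDF b)` holds by `rfl`. -/
noncomputable def laplacePDF (b t : ℝ) : ℝ≥0∞ :=
  ENNReal.ofReal ((1 / (2 * b)) * Real.exp (-|t| / b))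

@[fun_prop]
theorem measurable_laplacePDF (b : ℝ) : Measurable (laplacePDF b) := by
  unfold laplacePDF
  fun_prop

theorem laplacePDF_le {b : ℝ} (hb : 0 < b) (s t : ℝ) :
    laplacePDF b s ≤ ENNReal.ofReal (exp (|s - t| / b)) * laplacePDF b t := by
  rw [laplacePDF, laplacePDF, ← ENNReal.ofReal_mul (exp_pos _).le]
  refine ENNReal.ofReal_le_ofReal ?_
  calc 1 / (2 * b) * exp (-|s| / b) ≤ 1 / (2 * b) * exp (|s - t| / b + -|t| / b) := by
        rw [← add_div]
        gcongr
        linarith [abs_sub_abs_le_abs_sub t s, abs_sub_comm s t]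
    _ = exp (|s - t| / b) * (1 / (2 * b) * exp (-|t| / b)) := by rw [exp_add]; ring

theorem prod_laplacePDF_le {ι : Type*} [Fintype ι] {b : ℝ} (hb : 0 < b) (x y : ι → ℝ) :
    ∏ i, laplacePDF b (x i) ≤
      ENNReal.ofReal (exp ((∑ i, |x i - y i|) / b)) * ∏ i, laplacePDF b (y i) :=
  calc ∏ i, laplacePDF b (x i)
      ≤ ∏ i, ENNReal.ofReal (exp (|x i - y i| / b)) * laplacePDF b (y i) :=
        Finset.prod_le_prod' fun i _ ↦ laplacePDF_le hb _ _
    _ = _ := by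
        rw [Finset.prod_mul_distrib, ← ENNReal.ofReal_prod_of_nonneg fun _ _ ↦ (exp_pos _).le,
          ← exp_sum, Finset.sum_div]

theorem laplace_mechanism_dp_general {D : Type*} (Adj : D → D → Prop) (k : ℕ)
    (f : D → (Fin k → ℝ)) (Δ ε : ℝ) (hΔ : 0 < Δ) (hε : 0 < ε)
    (hsens : ∀ x x', Adj x x' → ∑ j, |f x j - f x' j| ≤ Δ)
    (x x' : D) (hadj : Adj x x') (S : Set (Fin k → ℝ)) :
    Measure.map (fun r => f x + r) (Measure.pi fun _ : Fin k => Lap (Δ / ε)) S ≤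
      ENNReal.ofReal (Real.exp ε) *
        Measure.map (fun r => f x' + r) (Measure.pi fun _ : Fin k => Lap (Δ / ε)) S := by
  have hb : 0 < Δ / ε := div_pos hΔ hε
  have hpi : Measure.pi (fun _ : Fin k ↦ Lap (Δ / ε)) =
      volume.withDensity fun s ↦ ∏ j, laplacePDF (Δ / ε) (s j) :=
    Measure.pi_withDensity _ fun _ ↦ measurable_laplacePDF _
  have hdensity (s : Fin k → ℝ) : ∏ j, laplacePDF (Δ / ε) ((-f x + s) j) ≤
      ENNReal.ofReal (exp ε) * ∏ j, laplacePDF (Δ / ε) ((-f x' + s) j) := by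
    refine (prod_laplacePDF_le hb _ (-f x' + s)).trans ?_
    gcongr
    calc (∑ j, |(-f x + s) j - (-f x' + s) j|) / (Δ / ε)
        = (∑ j, |f x j - f x' j|) / (Δ / ε) := by
          congr 1
          refine Finset.sum_congr rfl fun j _ ↦ ?_
          rw [Pi.add_apply, Pi.add_apply, add_sub_add_right_eq_sub, Pi.neg_apply, Pi.neg_apply,
            neg_sub_neg, abs_sub_comm]
      _ ≤ Δ / (Δ / ε) := by gcongr; exact hsens x x' hadj
      _ = ε := by field_simp
  have hmeas : Measurable fun s : Fin k → ℝ ↦ ∏ j, laplacePDF (Δ / ε) (s j) := by fun_prop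
  rw [hpi]
  exact Measure.le_iff'.1 (map_const_add_withDensity_le_smul volume hmeas hdensity) S

/-- Theorem 1 (Laplace mechanism). If `f : D → (Fin k → ℝ)` has ℓ₁-sensitivity at
most `Δ > 0` over adjacent inputs, `ε > 0`, and the mechanism `A` outputs
`f(x) + r` with the coordinates of `r` i.i.d. `Lap(Δ/ε)` (i.e. `A x` is the
pushforward of the `k`-fold product of `Lap(Δ/ε)` under `r ↦ f x + r`), then `A`
is `ε`-differentially private: for adjacent `x, x'` and every measurable `S`,
`A x S ≤ exp(ε) · A x' S`. -/
theorem laplace_mechanism_dp {D : Type*} (Adj : D → D → Prop) (k : ℕ)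
    (f : D → (Fin k → ℝ)) (Δ ε : ℝ) (hΔ : 0 < Δ) (hε : 0 < ε)
    (hsens : ∀ x x', Adj x x' → ∑ j, |f x j - f x' j| ≤ Δ)
    (x x' : D) (hadj : Adj x x') (S : Set (Fin k → ℝ)) (hS : MeasurableSet S) :
    Measure.map (fun r => f x + r) (Measure.pi fun _ : Fin k => Lap (Δ / ε)) S ≤
      ENNReal.ofReal (Real.exp ε) *
        Measure.map (fun r => f x' + r) (Measure.pi fun _ : Fin k => Lap (Δ / ε)) S :=
  laplace_mechanism_dp_general Adj k f Δ ε hΔ hε hsens x x' hadj S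
end

section
/- (Key mixture inequality underlying Theorem 2.) Let ε ≥ 0, μ ∈ [0,1], and let a, b, p be nonnegative reals satisfying p ≤ exp(ε)·a and p ≤ exp(ε)·b. Then μ·a + (1−μ)·p ≤ ((1−μ)·exp(ε) + μ) · (μ·a + (1−μ)·b). -/
/-! Writing `ν = 1 - μ`, the gap between the two sides is
`μν · ((E a + b) - (p + a)) + ν² · (E b - p)` with `E = exp ε ≥ 1`. The second term is
nonnegative by `p ≤ E b`, and the first because `p ≤ E · min a b` forces `p + a ≤ E a + b`. -/

theorem add_le_mul_add_of_le_mul_of_le_mul {E a b p : ℝ} (hE : 1 ≤ E)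
    (hpa : p ≤ E * a) (hpb : p ≤ E * b) : p + a ≤ E * a + b := by
  rcases le_total a b with hab | hba
  · linarith
  · linarith [mul_le_mul_of_nonneg_left hba (sub_nonneg.2 hE)]

theorem dropout_mixture_inequality_general (ε μ a b p : ℝ)
    (hε : 0 ≤ ε) (hμ0 : 0 ≤ μ) (hμ1 : μ ≤ 1)
    (hpa : p ≤ Real.exp ε * a) (hpb : p ≤ Real.exp ε * b) :
    μ * a + (1 - μ) * p ≤ ((1 - μ) * Real.exp ε + μ) * (μ * a + (1 - μ) * b) := by
  have hmin := add_le_mul_add_of_le_mul_of_le_mul (Real.one_le_exp hε) hpa hpb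
  linear_combination (μ * (1 - μ)) * hmin + (1 - μ) ^ 2 * hpb

/-- Key mixture inequality underlying Theorem 2: for `ε ≥ 0`, `μ ∈ [0,1]`, and
nonnegative reals `a, b, p` with `p ≤ exp(ε)·a` and `p ≤ exp(ε)·b`, we have
`μ·a + (1−μ)·p ≤ ((1−μ)·exp(ε) + μ) · (μ·a + (1−μ)·b)`. -/
theorem dropout_mixture_inequality (ε μ a b p : ℝ)
    (hε : 0 ≤ ε) (hμ0 : 0 ≤ μ) (hμ1 : μ ≤ 1)
    (ha : 0 ≤ a) (hb : 0 ≤ b) (hp : 0 ≤ p)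
    (hpa : p ≤ Real.exp ε * a) (hpb : p ≤ Real.exp ε * b) :
    μ * a + (1 - μ) * p ≤ ((1 - μ) * Real.exp ε + μ) * (μ * a + (1 - μ) * b) :=
  dropout_mixture_inequality_general ε μ a b p hε hμ0 hμ1 hpa hpb
end

section
/- (Theorem 2: word dropout enhances privacy.) Let A be a mechanism mapping each x : Fin d → ℝ to a probability measure A(x) on a measurable space Ω, and suppose A is ε-differentially private with respect to word-level adjacency: for all x, x' : Fin d → ℝ agreeing on all but at most one coordinate and all measurable S ⊆ Ω, A(x)(S) ≤ exp(ε) · A(x')(S), where ε ≥ 0. Let μ ∈ [0,1] and let the random mask I : Fin d → {0,1} have i.i.d. coordinates with P[I_j = 0] = μ and P[I_j = 1] = 1 − μ. Define the dropout mechanism B(x) to be the distribution of A(x ⊙ I) with the mask marginalised out: B(x)(S) = E_I[ A(x ⊙ I)(S) ]. Then B is ε'-differentially private with ε' = ln((1−μ)·exp(ε) + μ): for all adjacent x, x' and all measurable S ⊆ Ω, B(x)(S) ≤ exp(ε') · B(x')(S). -/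
/-!
Condition the mask on all coordinates except the one, `i`, where `x` and `x'` differ. If bit `i`
is dropped (probability `μ`), both inputs are masked to the same vector `v₀`; if it is kept, `x`
is masked to a vector `v₁` adjacent both to `v₀` and to the masked `x'`, call it `v₁'`. Writing
`aₖ` for the probability of `S` under `A vₖ`, DP of `A` gives `a₁ ≤ e^ε a₀` and `a₁ ≤ e^ε a₁'`, and
the claim `μ a₀ + (1 - μ) a₁ ≤ ((1 - μ) e^ε + μ) (μ a₀ + (1 - μ) a₁')` reduces, after expanding
with `μ + (1 - μ) = 1`, to `a₀ + a₁ ≤ e^ε a₀ + a₁'`, which follows by comparing `a₀` with `a₁'`.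
-/

open MeasureTheory

/-- The distribution on `Bool` of a single mask bit with dropout rate `μ`:
the bit is `0` (i.e. `false`, word masked) with probability `μ` and `1`
(i.e. `true`, word kept) with probability `1 − μ`. -/
noncomputable def maskBit (μ : ℝ) : Measure Bool :=
  (ENNReal.ofReal μ) • Measure.dirac false + (ENNReal.ofReal (1 - μ)) • Measure.dirac true

/-- The distribution of the random mask `I : Fin d → {0,1}` with i.i.d.
coordinates, each `0` with probability `μ`. -/
noncomputable def maskLaw (d : ℕ) (μ : ℝ) : Measure (Fin d → Bool) :=
  Measure.pi fun _ : Fin d => maskBit μ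

/-- The input `x` masked by `I`: coordinatewise, `(x ⊙ I) j = x j · I j`,
identifying the mask bit with the real numbers `0` and `1`. -/
def maskedInput {d : ℕ} (x : Fin d → ℝ) (I : Fin d → Bool) : Fin d → ℝ :=
  fun j => if I j then x j else 0

open scoped ENNReal

section WeightedBound

variable {R : Type*} [CommSemiring R] [LinearOrder R] [IsOrderedRing R] [CanonicallyOrderedAdd R]
  {e p q a₀ a₁ a₁' : R}

theorem add_le_mul_add_of_le_mul (he : 1 ≤ e) (h₀ : a₁ ≤ e * a₀) (h₁ : a₁ ≤ e * a₁') :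
    a₀ + a₁ ≤ e * a₀ + a₁' := by
  obtain ⟨f, rfl⟩ := le_iff_exists_add.1 he
  rcases le_total a₀ a₁' with h | h
  · calc a₀ + a₁ ≤ a₁' + (1 + f) * a₀ := add_le_add h h₀
      _ = (1 + f) * a₀ + a₁' := add_comm _ _
  · calc a₀ + a₁ ≤ a₀ + (a₁' + f * a₀) := by
          gcongr
          calc a₁ ≤ (1 + f) * a₁' := h₁
            _ = a₁' + f * a₁' := by ring
            _ ≤ a₁' + f * a₀ := by gcongr
      _ = (1 + f) * a₀ + a₁' := by ring

theorem weighted_add_le_mul_weighted_add (hpq : p + q = 1) (he : 1 ≤ e)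
    (h₀ : a₁ ≤ e * a₀) (h₁ : a₁ ≤ e * a₁') :
    p * a₀ + q * a₁ ≤ (q * e + p) * (p * a₀ + q * a₁') :=
  calc p * a₀ + q * a₁ = (p + q) * (p * a₀ + q * a₁) := by rw [hpq, one_mul]
    _ = p * p * a₀ + p * q * (a₀ + a₁) + q * q * a₁ := by ring
    _ ≤ p * p * a₀ + p * q * (e * a₀ + a₁') + q * q * (e * a₁') := by
        gcongr p * p * a₀ + p * q * ?_ + q * q * ?_
        exact add_le_mul_add_of_le_mul he h₀ h₁
    _ = (q * e + p) * (p * a₀ + q * a₁') := by ring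

end WeightedBound

instance (μ : ℝ) : IsFiniteMeasure (maskBit μ) :=
  ⟨by simp [maskBit]⟩

theorem lintegral_maskBit (μ : ℝ) (f : Bool → ℝ≥0∞) :
    ∫⁻ b, f b ∂maskBit μ = ENNReal.ofReal μ * f false + ENNReal.ofReal (1 - μ) * f true := by
  simp [maskBit, lintegral_add_measure, lintegral_smul_measure]

theorem lintegral_maskLaw_succ (n : ℕ) (μ : ℝ) (i : Fin (n + 1))
    (F : (Fin (n + 1) → Bool) → ℝ≥0∞) :
    ∫⁻ I, F I ∂maskLaw (n + 1) μ = ∫⁻ J, (ENNReal.ofReal μ * F (i.insertNth false J) +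
      ENNReal.ofReal (1 - μ) * F (i.insertNth true J)) ∂maskLaw n μ := by
  rw [maskLaw, ← (measurePreserving_piFinSuccAbove (fun _ => maskBit μ) i).symm.lintegral_comp_emb
    (MeasurableEquiv.measurableEmbedding _), lintegral_prod_symm _ Measurable.of_discrete.aemeasurable]
  simp only [MeasurableEquiv.piFinSuccAbove_symm_apply, lintegral_maskBit, maskLaw]
  rfl

section MaskedInput

variable {d : ℕ} {x x' : Fin d → ℝ} {I I' : Fin d → Bool} {i : Fin d}

theorem maskedInput_eq_of_eq_off (hx : ∀ j, j ≠ i → x j = x' j) (hI : I i = false) :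
    maskedInput x I = maskedInput x' I := by
  funext j
  by_cases hj : j = i
  · simp [maskedInput, hj, hI]
  · simp [maskedInput, hx j hj]

theorem maskedInput_eq_off (hx : ∀ j, j ≠ i → x j = x' j) (hI : ∀ j, j ≠ i → I j = I' j) :
    ∀ j, j ≠ i → maskedInput x I j = maskedInput x' I' j := fun j hj => by
  simp [maskedInput, hx j hj, hI j hj]

end MaskedInput

theorem insertNth_eq_off {n : ℕ} {α : Type*} (i : Fin (n + 1)) (a b : α) (J : Fin n → α) :
    ∀ j, j ≠ i → (i.insertNth a J : Fin (n + 1) → α) j = (i.insertNth b J : Fin (n + 1) → α) j :=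
  fun j hj => by
  obtain ⟨k, rfl⟩ := Fin.exists_succAbove_eq hj
  simp

theorem word_dropout_enhances_privacy_general (d : ℕ) {Ω : Type*} [MeasurableSpace Ω]
    (A : (Fin d → ℝ) → Measure Ω) (ε μ : ℝ)
    (hε : 0 ≤ ε) (hμ0 : 0 ≤ μ) (hμ1 : μ ≤ 1)
    (hA : ∀ x x' : Fin d → ℝ, (∃ i, ∀ j, j ≠ i → x j = x' j) →
      ∀ S : Set Ω, MeasurableSet S → A x S ≤ ENNReal.ofReal (Real.exp ε) * A x' S)
    (x x' : Fin d → ℝ) (hadj : ∃ i, ∀ j, j ≠ i → x j = x' j)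
    (S : Set Ω) (hS : MeasurableSet S) :
    (∫⁻ I : Fin d → Bool, A (maskedInput x I) S ∂(maskLaw d μ)) ≤
      ENNReal.ofReal (Real.exp (Real.log ((1 - μ) * Real.exp ε + μ))) *
        ∫⁻ I : Fin d → Bool, A (maskedInput x' I) S ∂(maskLaw d μ) := by
  obtain ⟨i, hxx'⟩ := hadj
  obtain ⟨n, rfl⟩ : ∃ n, d = n + 1 := Nat.exists_eq_add_one.2 i.pos
  have he : 1 ≤ Real.exp ε := Real.one_le_exp hε
  rw [Real.exp_log (by nlinarith), ENNReal.ofReal_add (by nlinarith) hμ0,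
    ENNReal.ofReal_mul (by linarith), lintegral_maskLaw_succ n μ i,
    lintegral_maskLaw_succ n μ i, ← lintegral_const_mul _ Measurable.of_discrete]
  refine lintegral_mono fun J => ?_
  rw [maskedInput_eq_of_eq_off hxx' (by simp)]
  refine weighted_add_le_mul_weighted_add ?_ (ENNReal.one_le_ofReal.2 he) ?_ ?_
  · rw [← ENNReal.ofReal_add hμ0 (by linarith), add_sub_cancel, ENNReal.ofReal_one]
  · exact hA _ _ ⟨i, maskedInput_eq_off hxx' (insertNth_eq_off i _ _ J)⟩ S hS
  · exact hA _ _ ⟨i, maskedInput_eq_off hxx' fun _ _ => rfl⟩ S hS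

/-- Theorem 2 (word dropout enhances privacy). If the mechanism `A`, mapping
each `x : Fin d → ℝ` to a probability measure on `Ω`, is `ε`-differentially
private w.r.t. word-level adjacency, and the dropout mechanism `B` outputs
`A (x ⊙ I)` with the random mask `I` (i.i.d. coordinates, `P[I_j = 0] = μ`)
marginalised out, i.e. `B x S = E_I [A (x ⊙ I) S]`, then `B` is
`ε'`-differentially private with `ε' = ln((1−μ)·exp(ε) + μ)`. -/
theorem word_dropout_enhances_privacy (d : ℕ) {Ω : Type*} [MeasurableSpace Ω]
    (A : (Fin d → ℝ) → Measure Ω) (ε μ : ℝ)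
    (hε : 0 ≤ ε) (hμ0 : 0 ≤ μ) (hμ1 : μ ≤ 1)
    (hprob : ∀ x, IsProbabilityMeasure (A x))
    (hA : ∀ x x' : Fin d → ℝ, (∃ i, ∀ j, j ≠ i → x j = x' j) →
      ∀ S : Set Ω, MeasurableSet S → A x S ≤ ENNReal.ofReal (Real.exp ε) * A x' S)
    (x x' : Fin d → ℝ) (hadj : ∃ i, ∀ j, j ≠ i → x j = x' j)
    (S : Set Ω) (hS : MeasurableSet S) :
    (∫⁻ I : Fin d → Bool, A (maskedInput x I) S ∂(maskLaw d μ)) ≤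
      ENNReal.ofReal (Real.exp (Real.log ((1 - μ) * Real.exp ε + μ))) *
        ∫⁻ I : Fin d → Bool, A (maskedInput x' I) S ∂(maskLaw d μ) :=
  word_dropout_enhances_privacy_general d A ε μ hε hμ0 hμ1 hA x x' hadj S hS
end
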